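/- arXiv:2602.05689 — 2 statements merged into one kernel-verified Lean document; each statement's English description precedes it below -/
import Mathlib

section
/- Let (C, R) be a π-clan and tp : Tm ⟶ Ty an algebraic universe equipped with an algebraic Π-type structure (Π : P_tp Ty ⟶ Ty, lam : P_tp Tm ⟶ Tm). Then tp admits an elementary Π-type structure, in which for A : Γ ⟶ Ty and B : Γ.A ⟶ Ty the type Π_A B : Γ ⟶ Ty is the composite of the map (A, B) : Γ ⟶ P_tp Ty (classifying the pair via the universal property of P_tp) with Π. -/
namespace Paper

open CategoryTheory Limits

universe v u

variable {C : Type u} [Category.{v} C]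

/-- A universe in a category `C`: a morphism `tp : Tm ⟶ Ty` together with chosen
pullbacks (context extensions) along every `A : Γ ⟶ Ty`. -/
structure Univ (C : Type u) [Category.{v} C] where
  Tm : C
  Ty : C
  tp : Tm ⟶ Ty
  ext : ∀ {Γ : C}, (Γ ⟶ Ty) → C
  disp : ∀ {Γ : C} (A : Γ ⟶ Ty), ext A ⟶ Γ
  var : ∀ {Γ : C} (A : Γ ⟶ Ty), ext A ⟶ Tm
  isPullback : ∀ {Γ : C} (A : Γ ⟶ Ty), IsPullback (var A) (disp A) tp A

/-- The induced map `σ.a : Δ ⟶ Γ.A` into the chosen pullback. -/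
noncomputable def Univ.substCons (U : Univ C) {Δ Γ : C} (σ : Δ ⟶ Γ) (A : Γ ⟶ U.Ty)
    (a : Δ ⟶ U.Tm) (h : a ≫ U.tp = σ ≫ A) : Δ ⟶ U.ext A :=
  (U.isPullback A).lift a σ h

@[simp] lemma Univ.substCons_var (U : Univ C) {Δ Γ : C} (σ : Δ ⟶ Γ) (A : Γ ⟶ U.Ty)
    (a : Δ ⟶ U.Tm) (h : a ≫ U.tp = σ ≫ A) : U.substCons σ A a h ≫ U.var A = a :=
  (U.isPullback A).lift_fst a σ h

@[simp] lemma Univ.substCons_disp (U : Univ C) {Δ Γ : C} (σ : Δ ⟶ Γ) (A : Γ ⟶ U.Ty)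
    (a : Δ ⟶ U.Tm) (h : a ≫ U.tp = σ ≫ A) : U.substCons σ A a h ≫ U.disp A = σ :=
  (U.isPullback A).lift_snd a σ h

/-- The weakening `σ̃ := (d_{σ≫A} ≫ σ).var_{σ≫A} : Δ.(σ ≫ A) ⟶ Γ.A`. -/
noncomputable def Univ.wk (U : Univ C) {Δ Γ : C} (σ : Δ ⟶ Γ) (A : Γ ⟶ U.Ty) :
    U.ext (σ ≫ A) ⟶ U.ext A :=
  U.substCons (U.disp (σ ≫ A) ≫ σ) A (U.var (σ ≫ A))
    (by rw [(U.isPullback (σ ≫ A)).w, Category.assoc])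

/-- The section `id_Γ.a : Γ ⟶ Γ.A` of a term `a` of type `A`. -/
noncomputable def Univ.sec (U : Univ C) {Γ : C} (A : Γ ⟶ U.Ty) (a : Γ ⟶ U.Tm)
    (ha : a ≫ U.tp = A) : Γ ⟶ U.ext A :=
  U.substCons (𝟙 Γ) A a (by rw [ha, Category.id_comp])

@[simp] lemma Univ.sec_var (U : Univ C) {Γ : C} (A : Γ ⟶ U.Ty) (a : Γ ⟶ U.Tm)
    (ha : a ≫ U.tp = A) : U.sec A a ha ≫ U.var A = a :=
  U.substCons_var _ _ _ _

@[simp] lemma Univ.sec_disp (U : Univ C) {Γ : C} (A : Γ ⟶ U.Ty) (a : Γ ⟶ U.Tm)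
    (ha : a ≫ U.tp = A) : U.sec A a ha ≫ U.disp A = 𝟙 Γ :=
  U.substCons_disp _ _ _ _

/-- An elementary `Unit`-type structure on a universe. -/
structure ElemUnit (U : Univ C) where
  unitTy : ∀ (Γ : C), Γ ⟶ U.Ty
  unitTy_stable : ∀ {Δ Γ : C} (σ : Δ ⟶ Γ), σ ≫ unitTy Γ = unitTy Δ
  unitTm : ∀ (Γ : C), Γ ⟶ U.Tm
  unitTm_tp : ∀ (Γ : C), unitTm Γ ≫ U.tp = unitTy Γ
  unitTm_unique : ∀ {Γ : C} (u : Γ ⟶ U.Tm), u ≫ U.tp = unitTy Γ → u = unitTm Γ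

/-- An elementary `Π`-type structure on a universe (unlam-stability is not assumed). -/
structure ElemPi (U : Univ C) where
  Pi : ∀ {Γ : C} (A : Γ ⟶ U.Ty), (U.ext A ⟶ U.Ty) → (Γ ⟶ U.Ty)
  Pi_stable : ∀ {Δ Γ : C} (σ : Δ ⟶ Γ) (A : Γ ⟶ U.Ty) (B : U.ext A ⟶ U.Ty),
    Pi (σ ≫ A) (U.wk σ A ≫ B) = σ ≫ Pi A B
  lam : ∀ {Γ : C} (A : Γ ⟶ U.Ty), (U.ext A ⟶ U.Tm) → (Γ ⟶ U.Tm)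
  lam_tp : ∀ {Γ : C} (A : Γ ⟶ U.Ty) (b : U.ext A ⟶ U.Tm),
    lam A b ≫ U.tp = Pi A (b ≫ U.tp)
  lam_stable : ∀ {Δ Γ : C} (σ : Δ ⟶ Γ) (A : Γ ⟶ U.Ty) (b : U.ext A ⟶ U.Tm),
    lam (σ ≫ A) (U.wk σ A ≫ b) = σ ≫ lam A b
  unlam : ∀ {Γ : C} (A : Γ ⟶ U.Ty) (B : U.ext A ⟶ U.Ty) (f : Γ ⟶ U.Tm),
    f ≫ U.tp = Pi A B → (U.ext A ⟶ U.Tm)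
  unlam_tp : ∀ {Γ : C} (A : Γ ⟶ U.Ty) (B : U.ext A ⟶ U.Ty) (f : Γ ⟶ U.Tm)
    (hf : f ≫ U.tp = Pi A B), unlam A B f hf ≫ U.tp = B
  unlam_lam : ∀ {Γ : C} (A : Γ ⟶ U.Ty) (b : U.ext A ⟶ U.Tm)
    (h : lam A b ≫ U.tp = Pi A (b ≫ U.tp)), unlam A (b ≫ U.tp) (lam A b) h = b
  lam_unlam : ∀ {Γ : C} (A : Γ ⟶ U.Ty) (B : U.ext A ⟶ U.Ty) (f : Γ ⟶ U.Tm)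
    (hf : f ≫ U.tp = Pi A B), lam A (unlam A B f hf) = f

/-- An elementary `Σ`-type structure on a universe (fst/snd-stability is not assumed). -/
structure ElemSigma (U : Univ C) where
  Sig : ∀ {Γ : C} (A : Γ ⟶ U.Ty), (U.ext A ⟶ U.Ty) → (Γ ⟶ U.Ty)
  Sig_stable : ∀ {Δ Γ : C} (σ : Δ ⟶ Γ) (A : Γ ⟶ U.Ty) (B : U.ext A ⟶ U.Ty),
    Sig (σ ≫ A) (U.wk σ A ≫ B) = σ ≫ Sig A B
  pair : ∀ {Γ : C} (A : Γ ⟶ U.Ty) (B : U.ext A ⟶ U.Ty) (a b : Γ ⟶ U.Tm)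
    (ha : a ≫ U.tp = A), b ≫ U.tp = U.sec A a ha ≫ B → (Γ ⟶ U.Tm)
  pair_tp : ∀ {Γ : C} (A : Γ ⟶ U.Ty) (B : U.ext A ⟶ U.Ty) (a b : Γ ⟶ U.Tm)
    (ha : a ≫ U.tp = A) (hb : b ≫ U.tp = U.sec A a ha ≫ B),
    pair A B a b ha hb ≫ U.tp = Sig A B
  pair_stable : ∀ {Δ Γ : C} (σ : Δ ⟶ Γ) (A : Γ ⟶ U.Ty) (B : U.ext A ⟶ U.Ty)
    (a b : Γ ⟶ U.Tm) (ha : a ≫ U.tp = A) (hb : b ≫ U.tp = U.sec A a ha ≫ B)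
    (ha' : (σ ≫ a) ≫ U.tp = σ ≫ A)
    (hb' : (σ ≫ b) ≫ U.tp = U.sec (σ ≫ A) (σ ≫ a) ha' ≫ (U.wk σ A ≫ B)),
    pair (σ ≫ A) (U.wk σ A ≫ B) (σ ≫ a) (σ ≫ b) ha' hb' = σ ≫ pair A B a b ha hb
  fst : ∀ {Γ : C} (A : Γ ⟶ U.Ty) (B : U.ext A ⟶ U.Ty) (s : Γ ⟶ U.Tm),
    s ≫ U.tp = Sig A B → (Γ ⟶ U.Tm)
  snd : ∀ {Γ : C} (A : Γ ⟶ U.Ty) (B : U.ext A ⟶ U.Ty) (s : Γ ⟶ U.Tm),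
    s ≫ U.tp = Sig A B → (Γ ⟶ U.Tm)
  fst_tp : ∀ {Γ : C} (A : Γ ⟶ U.Ty) (B : U.ext A ⟶ U.Ty) (s : Γ ⟶ U.Tm)
    (hs : s ≫ U.tp = Sig A B), fst A B s hs ≫ U.tp = A
  snd_tp : ∀ {Γ : C} (A : Γ ⟶ U.Ty) (B : U.ext A ⟶ U.Ty) (s : Γ ⟶ U.Tm)
    (hs : s ≫ U.tp = Sig A B),
    snd A B s hs ≫ U.tp = U.sec A (fst A B s hs) (fst_tp A B s hs) ≫ B
  fst_pair : ∀ {Γ : C} (A : Γ ⟶ U.Ty) (B : U.ext A ⟶ U.Ty) (a b : Γ ⟶ U.Tm)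
    (ha : a ≫ U.tp = A) (hb : b ≫ U.tp = U.sec A a ha ≫ B)
    (h : pair A B a b ha hb ≫ U.tp = Sig A B), fst A B (pair A B a b ha hb) h = a
  snd_pair : ∀ {Γ : C} (A : Γ ⟶ U.Ty) (B : U.ext A ⟶ U.Ty) (a b : Γ ⟶ U.Tm)
    (ha : a ≫ U.tp = A) (hb : b ≫ U.tp = U.sec A a ha ≫ B)
    (h : pair A B a b ha hb ≫ U.tp = Sig A B), snd A B (pair A B a b ha hb) h = b
  pair_fst_snd : ∀ {Γ : C} (A : Γ ⟶ U.Ty) (B : U.ext A ⟶ U.Ty) (s : Γ ⟶ U.Tm)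
    (hs : s ≫ U.tp = Sig A B) (h1 : fst A B s hs ≫ U.tp = A)
    (h2 : snd A B s hs ≫ U.tp = U.sec A (fst A B s hs) h1 ≫ B),
    pair A B (fst A B s hs) (snd A B s hs) h1 h2 = s

/-- A weak pullback structure on a commutative square. -/
structure WeakPullbackStr {P X Y Z : C} (g' : P ⟶ X) (f' : P ⟶ Y) (f : X ⟶ Z) (g : Y ⟶ Z) where
  lift : ∀ {W : C} (x : W ⟶ X) (y : W ⟶ Y), x ≫ f = y ≫ g → (W ⟶ P)
  lift_fst : ∀ {W : C} (x : W ⟶ X) (y : W ⟶ Y) (h : x ≫ f = y ≫ g), lift x y h ≫ g' = x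
  lift_snd : ∀ {W : C} (x : W ⟶ X) (y : W ⟶ Y) (h : x ≫ f = y ≫ g), lift x y h ≫ f' = y

/-- Coherence of a weak pullback structure: the chosen lifts commute with all cone morphisms. -/
def WeakPullbackStr.Coherent {P X Y Z : C} {g' : P ⟶ X} {f' : P ⟶ Y} {f : X ⟶ Z} {g : Y ⟶ Z}
    (w : WeakPullbackStr g' f' f g) : Prop :=
  ∀ {V W : C} (σ : V ⟶ W) (x : W ⟶ X) (y : W ⟶ Y) (h : x ≫ f = y ≫ g)
    (h' : (σ ≫ x) ≫ f = (σ ≫ y) ≫ g),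
    σ ≫ w.lift x y h = w.lift (σ ≫ x) (σ ≫ y) h'

end Paper

namespace Paper

open CategoryTheory Limits

universe v u

variable {C : Type u} [Category.{v} C]

/-- A pushforward of `g : Z ⟶ Y` along `f : Y ⟶ X`, presented by a counit and the
universal property `Hom_{C/Y}(f^* h, g) ≅ Hom_{C/X}(h, f_* g)`, natural in `h ∈ C/X`
(the naturality being packaged by the counit formulation). -/
structure Pushforward {X Y Z : C} (f : Y ⟶ X) (g : Z ⟶ Y) where
  obj : C
  π : obj ⟶ X
  /-- domain of the counit: a pullback of `f` along `π` -/
  cod : C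
  codFst : cod ⟶ obj
  codSnd : cod ⟶ Y
  cod_isPullback : IsPullback codFst codSnd π f
  /-- the counit `f^*(f_* g) ⟶ g`, a morphism over `Y` -/
  ε : cod ⟶ Z
  ε_comm : ε ≫ g = codSnd
  /-- transposition: a map `f^* h ⟶ g` over `Y` induces a map `h ⟶ f_* g` over `X` -/
  lift : ∀ {A Q : C} (h : A ⟶ X) (qf : Q ⟶ A) (qs : Q ⟶ Y),
    IsPullback qf qs h f → ∀ (k : Q ⟶ Z), k ≫ g = qs → (A ⟶ obj)
  lift_π : ∀ {A Q : C} (h : A ⟶ X) (qf : Q ⟶ A) (qs : Q ⟶ Y)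
    (hq : IsPullback qf qs h f) (k : Q ⟶ Z) (hk : k ≫ g = qs),
    lift h qf qs hq k hk ≫ π = h
  lift_ε : ∀ {A Q : C} (h : A ⟶ X) (qf : Q ⟶ A) (qs : Q ⟶ Y)
    (hq : IsPullback qf qs h f) (k : Q ⟶ Z) (hk : k ≫ g = qs),
    cod_isPullback.lift (qf ≫ lift h qf qs hq k hk) qs
      (by rw [Category.assoc, lift_π h qf qs hq k hk, hq.w]) ≫ ε = k
  lift_unique : ∀ {A Q : C} (h : A ⟶ X) (qf : Q ⟶ A) (qs : Q ⟶ Y)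
    (hq : IsPullback qf qs h f) (k : Q ⟶ Z) (hk : k ≫ g = qs)
    (m : A ⟶ obj) (hm : m ≫ π = h),
    cod_isPullback.lift (qf ≫ m) qs (by rw [Category.assoc, hm, hq.w]) ≫ ε = k →
    m = lift h qf qs hq k hk

end Paper

namespace Paper

open CategoryTheory Limits

universe v u

variable {C : Type u} [Category.{v} C]

/-- A π-clan: a class `R` of maps containing all isomorphisms, closed under
composition, stable under pullback (pullbacks of `R`-maps along arbitrary maps
exist), closed under pushforward (with chosen pushforward data), together with a
terminal object for which every map `X ⟶ 1` is an `R`-map. -/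
structure PiClan (C : Type u) [Category.{v} C] where
  R : MorphismProperty C
  hasPb : ∀ {A X Y : C} (h : A ⟶ X) (f : Y ⟶ X), R f → HasPullback h f
  isoMem : ∀ {X Y : C} (e : X ⟶ Y), IsIso e → R e
  compMem : ∀ {X Y Z : C} (f : X ⟶ Y) (g : Y ⟶ Z), R f → R g → R (f ≫ g)
  pbMem : ∀ {P A X Y : C} {fst : P ⟶ A} {snd : P ⟶ Y} {h : A ⟶ X} {f : Y ⟶ X},
    IsPullback fst snd h f → R f → R fst
  push : ∀ {X Y Z : C} (f : Y ⟶ X) (g : Z ⟶ Y), R f → R g → Pushforward f g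
  pushMem : ∀ {X Y Z : C} (f : Y ⟶ X) (g : Z ⟶ Y) (hf : R f) (hg : R g),
    R (push f g hf hg).π
  term : C
  isTerm : IsTerminal term
  allObj : ∀ X : C, R (isTerm.from X)

namespace PiClan

variable (D : PiClan C)

/-- The chosen pullback of an `R`-map `f` along an arbitrary map `h`. -/
noncomputable def pb {A X Y : C} (h : A ⟶ X) (f : Y ⟶ X) (hf : D.R f) : C :=
  haveI := D.hasPb h f hf
  pullback h f

noncomputable def pbFst {A X Y : C} (h : A ⟶ X) (f : Y ⟶ X) (hf : D.R f) :
    D.pb h f hf ⟶ A :=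
  haveI := D.hasPb h f hf
  pullback.fst h f

noncomputable def pbSnd {A X Y : C} (h : A ⟶ X) (f : Y ⟶ X) (hf : D.R f) :
    D.pb h f hf ⟶ Y :=
  haveI := D.hasPb h f hf
  pullback.snd h f

lemma pb_isPullback {A X Y : C} (h : A ⟶ X) (f : Y ⟶ X) (hf : D.R f) :
    IsPullback (D.pbFst h f hf) (D.pbSnd h f hf) h f :=
  haveI := D.hasPb h f hf
  IsPullback.of_hasPullback h f

/-- The pullback of an `R`-map is an `R`-map. -/
lemma pbFst_mem {A X Y : C} (h : A ⟶ X) (f : Y ⟶ X) (hf : D.R f) :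
    D.R (D.pbFst h f hf) :=
  D.pbMem (D.pb_isPullback h f hf) hf

lemma pbSnd_mem {A X Y : C} (h : A ⟶ X) (f : Y ⟶ X) (hf : D.R f) (hh : D.R h) :
    D.R (D.pbSnd h f hf) :=
  D.pbMem (D.pb_isPullback h f hf).flip hh

/-- Reindexing of pullbacks along a map of bases (`σ ×_X Y`). -/
noncomputable def pbMapLeft {A' A X Y : C} (σ : A' ⟶ A) (h : A ⟶ X) (f : Y ⟶ X)
    (hf : D.R f) : D.pb (σ ≫ h) f hf ⟶ D.pb h f hf :=
  (D.pb_isPullback h f hf).lift (D.pbFst (σ ≫ h) f hf ≫ σ) (D.pbSnd (σ ≫ h) f hf)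
    (by rw [Category.assoc, ← (D.pb_isPullback (σ ≫ h) f hf).w])

/-- The map on pullbacks induced by a morphism `t : g₁ ⟶ g₂` over `X`. -/
noncomputable def pbMapRight {A X Z₁ Z₂ : C} (h : A ⟶ X) (g₁ : Z₁ ⟶ X) (g₂ : Z₂ ⟶ X)
    (hg₁ : D.R g₁) (hg₂ : D.R g₂) (t : Z₁ ⟶ Z₂) (ht : t ≫ g₂ = g₁) :
    D.pb h g₁ hg₁ ⟶ D.pb h g₂ hg₂ :=
  (D.pb_isPullback h g₂ hg₂).lift (D.pbFst h g₁ hg₁) (D.pbSnd h g₁ hg₁ ≫ t)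
    (by rw [Category.assoc, ht, (D.pb_isPullback h g₁ hg₁).w])

@[simp] lemma pbMapRight_fst {A X Z₁ Z₂ : C} (h : A ⟶ X) (g₁ : Z₁ ⟶ X) (g₂ : Z₂ ⟶ X)
    (hg₁ : D.R g₁) (hg₂ : D.R g₂) (t : Z₁ ⟶ Z₂) (ht : t ≫ g₂ = g₁) :
    D.pbMapRight h g₁ g₂ hg₁ hg₂ t ht ≫ D.pbFst h g₂ hg₂ = D.pbFst h g₁ hg₁ :=
  (D.pb_isPullback h g₂ hg₂).lift_fst _ _ _

/-- The map on pullbacks induced on the `R`-map legs by `ρ` with `ρ ≫ f' = f`,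
i.e. `h ×_X ρ : h ×_X f ⟶ h ×_X f'`. -/
noncomputable def pbMapOver {A X E E' : C} (h : A ⟶ X) (f : E ⟶ X) (f' : E' ⟶ X)
    (hf : D.R f) (hf' : D.R f') (ρ : E ⟶ E') (w : ρ ≫ f' = f) :
    D.pb h f hf ⟶ D.pb h f' hf' :=
  (D.pb_isPullback h f' hf').lift (D.pbFst h f hf) (D.pbSnd h f hf ≫ ρ)
    (by rw [Category.assoc, w, (D.pb_isPullback h f hf).w])

/-- Functorial action of the pushforward `f_*` on a morphism `t : g₁ ⟶ g₂` of `R(Y)`. -/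
noncomputable def pushMap {X Y Z₁ Z₂ : C} (f : Y ⟶ X) (g₁ : Z₁ ⟶ Y) (g₂ : Z₂ ⟶ Y)
    (hf : D.R f) (hg₁ : D.R g₁) (hg₂ : D.R g₂) (t : Z₁ ⟶ Z₂) (ht : t ≫ g₂ = g₁) :
    (D.push f g₁ hf hg₁).obj ⟶ (D.push f g₂ hf hg₂).obj :=
  (D.push f g₂ hf hg₂).lift (D.push f g₁ hf hg₁).π
    (D.push f g₁ hf hg₁).codFst (D.push f g₁ hf hg₁).codSnd
    (D.push f g₁ hf hg₁).cod_isPullback ((D.push f g₁ hf hg₁).ε ≫ t)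
    (by rw [Category.assoc, ht, (D.push f g₁ hf hg₁).ε_comm])

@[simp] lemma pushMap_π {X Y Z₁ Z₂ : C} (f : Y ⟶ X) (g₁ : Z₁ ⟶ Y) (g₂ : Z₂ ⟶ Y)
    (hf : D.R f) (hg₁ : D.R g₁) (hg₂ : D.R g₂) (t : Z₁ ⟶ Z₂) (ht : t ≫ g₂ = g₁) :
    D.pushMap f g₁ g₂ hf hg₁ hg₂ t ht ≫ (D.push f g₂ hf hg₂).π =
      (D.push f g₁ hf hg₁).π :=
  (D.push f g₂ hf hg₂).lift_π _ _ _ _ _ _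

section Polynomial

/-- The base change `E^* X` of `X` to an object over `E`, i.e. the product `E × X`
realized as a pullback over the terminal object. -/
noncomputable def estar (E X : C) : C :=
  D.pb (D.isTerm.from X) (D.isTerm.from E) (D.allObj E)

noncomputable def estarFst (E X : C) : D.estar E X ⟶ X :=
  D.pbFst (D.isTerm.from X) (D.isTerm.from E) (D.allObj E)

noncomputable def estarSnd (E X : C) : D.estar E X ⟶ E :=
  D.pbSnd (D.isTerm.from X) (D.isTerm.from E) (D.allObj E)

lemma estarSnd_mem (E X : C) : D.R (D.estarSnd E X) :=
  D.pbSnd_mem _ _ _ (D.allObj X)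

/-- The pushforward stage of the polynomial functor `P_f` applied to `X`:
`f_* (E^* X)` as an object over `B`. -/
noncomputable def polyPush {E B : C} (f : E ⟶ B) (hf : D.R f) (X : C) :
    Pushforward f (D.estarSnd E X) :=
  D.push f (D.estarSnd E X) hf (D.estarSnd_mem E X)

/-- The object `P_f X = B_! (f_* (E^* X))` of the polynomial functor. -/
noncomputable def polyObj {E B : C} (f : E ⟶ B) (hf : D.R f) (X : C) : C :=
  (D.polyPush f hf X).obj

/-- The universal first projection `fstProj : P_f X ⟶ B`. -/
noncomputable def fstProj {E B : C} (f : E ⟶ B) (hf : D.R f) (X : C) :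
    D.polyObj f hf X ⟶ B :=
  (D.polyPush f hf X).π

/-- The universal second projection `sndProj : fstProj ×_B f ⟶ X`. -/
noncomputable def sndProj {E B : C} (f : E ⟶ B) (hf : D.R f) (X : C) :
    D.pb (D.fstProj f hf X) f hf ⟶ X :=
  (D.polyPush f hf X).cod_isPullback.lift (D.pbFst (D.fstProj f hf X) f hf)
      (D.pbSnd (D.fstProj f hf X) f hf) (D.pb_isPullback (D.fstProj f hf X) f hf).w
    ≫ (D.polyPush f hf X).ε ≫ D.estarFst E X

/-- The second component of a generalized element `t : Γ ⟶ P_f X`, relative to a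
chosen presentation `g` of its first component. -/
noncomputable def polySndAt {E B : C} (f : E ⟶ B) (hf : D.R f) (X : C) {Γ : C}
    (g : Γ ⟶ B) (t : Γ ⟶ D.polyObj f hf X) (ht : t ≫ D.fstProj f hf X = g) :
    D.pb g f hf ⟶ X :=
  (D.pb_isPullback (D.fstProj f hf X) f hf).lift (D.pbFst g f hf ≫ t) (D.pbSnd g f hf)
      (by rw [Category.assoc, ht]; exact (D.pb_isPullback g f hf).w)
    ≫ D.sndProj f hf X

/-- The second component `snd(t) = (t ×_B f) ≫ sndProj` of `t : Γ ⟶ P_f X`. -/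
noncomputable def polySnd {E B : C} (f : E ⟶ B) (hf : D.R f) (X : C) {Γ : C}
    (t : Γ ⟶ D.polyObj f hf X) : D.pb (t ≫ D.fstProj f hf X) f hf ⟶ X :=
  D.polySndAt f hf X (t ≫ D.fstProj f hf X) t rfl

/-- The generalized element `Γ ⟶ P_f X` classifying a pair `(g, x)`. -/
noncomputable def polyPair {E B : C} (f : E ⟶ B) (hf : D.R f) (X : C) {Γ : C}
    (g : Γ ⟶ B) (x : D.pb g f hf ⟶ X) : Γ ⟶ D.polyObj f hf X :=
  (D.polyPush f hf X).lift g (D.pbFst g f hf) (D.pbSnd g f hf) (D.pb_isPullback g f hf)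
    ((D.pb_isPullback (D.isTerm.from X) (D.isTerm.from E) (D.allObj E)).lift
      x (D.pbSnd g f hf) (D.isTerm.hom_ext _ _))
    ((D.pb_isPullback (D.isTerm.from X) (D.isTerm.from E) (D.allObj E)).lift_snd _ _ _)

@[simp] lemma polyPair_fst {E B : C} (f : E ⟶ B) (hf : D.R f) (X : C) {Γ : C}
    (g : Γ ⟶ B) (x : D.pb g f hf ⟶ X) :
    D.polyPair f hf X g x ≫ D.fstProj f hf X = g :=
  (D.polyPush f hf X).lift_π _ _ _ _ _ _

/-- The functorial action of the polynomial functor `P_f` on `u : X ⟶ X'`. -/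
noncomputable def polyMap {E B : C} (f : E ⟶ B) (hf : D.R f) {X X' : C} (u : X ⟶ X') :
    D.polyObj f hf X ⟶ D.polyObj f hf X' :=
  D.polyPair f hf X' (D.fstProj f hf X) (D.sndProj f hf X ≫ u)

/-- The domain of the polynomial composition `f' ▷ f`. -/
noncomputable def compDom {E B E' B' : C} (f : E ⟶ B) (hf : D.R f)
    (f' : E' ⟶ B') (hf' : D.R f') : C :=
  D.pb (D.sndProj f hf B') f' hf'

/-- The polynomial composition `f' ▷ f : compDom ⟶ P_f B'`. -/
noncomputable def polyComp {E B E' B' : C} (f : E ⟶ B) (hf : D.R f)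
    (f' : E' ⟶ B') (hf' : D.R f') : D.compDom f hf f' hf' ⟶ D.polyObj f hf B' :=
  D.pbFst (D.sndProj f hf B') f' hf' ≫ D.pbFst (D.fstProj f hf B') f hf

/-- The map into `fstProj ×_B f` classifying `(polyPair g x, a)`. -/
noncomputable def polyMid {E B : C} (f : E ⟶ B) (hf : D.R f) (X : C) {Γ : C}
    (g : Γ ⟶ B) (x : D.pb g f hf ⟶ X) (a : Γ ⟶ E) (ha : a ≫ f = g) :
    Γ ⟶ D.pb (D.fstProj f hf X) f hf :=
  (D.pb_isPullback (D.fstProj f hf X) f hf).lift (D.polyPair f hf X g x) a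
    (by rw [D.polyPair_fst]; exact ha.symm)

/-- The generalized element of `compDom` classifying `(g, x, a, b)`. -/
noncomputable def compDomPair {E B E' B' : C} (f : E ⟶ B) (hf : D.R f)
    (f' : E' ⟶ B') (hf' : D.R f') {Γ : C} (g : Γ ⟶ B) (x : D.pb g f hf ⟶ B')
    (a : Γ ⟶ E) (ha : a ≫ f = g) (b : Γ ⟶ E')
    (hb : b ≫ f' = D.polyMid f hf B' g x a ha ≫ D.sndProj f hf B') :
    Γ ⟶ D.compDom f hf f' hf' :=
  (D.pb_isPullback (D.sndProj f hf B') f' hf').lift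
    (D.polyMid f hf B' g x a ha) b hb.symm

end Polynomial

end PiClan

/-- The principal class generated by `t`: all morphisms arising as a pullback of `t`. -/
def principal {Y X : C} (t : Y ⟶ X) : MorphismProperty C :=
  fun E B f => ∃ (top : E ⟶ Y) (base : B ⟶ X), IsPullback top f t base

/-- The property of being a π-preclan (Prop-valued, existence form). -/
structure IsPiPreclan (R : MorphismProperty C) : Prop where
  hasPb : ∀ {A X Y : C} (h : A ⟶ X) (f : Y ⟶ X), R f → HasPullback h f
  pbMem : ∀ {P A X Y : C} {fst : P ⟶ A} {snd : P ⟶ Y} {h : A ⟶ X} {f : Y ⟶ X},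
    IsPullback fst snd h f → R f → R fst
  isoMem : ∀ {X Y : C} (e : X ⟶ Y), IsIso e → R e
  compMem : ∀ {X Y Z : C} (f : X ⟶ Y) (g : Y ⟶ Z), R f → R g → R (f ≫ g)
  pushClosed : ∀ {X Y Z : C} (f : Y ⟶ X) (g : Z ⟶ Y), R f → R g →
    ∃ p : Pushforward f g, R p.π

/-- The property of being a π-clan (Prop-valued): a π-preclan on a category with a
terminal object in which every map to a terminal object belongs to the class. -/
structure IsPiClan (R : MorphismProperty C) : Prop where
  toIsPiPreclan : IsPiPreclan R
  exists_terminal : ∃ T : C, Nonempty (IsTerminal T)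
  allObj : ∀ {X T : C}, IsTerminal T → ∀ f : X ⟶ T, R f

end Paper

namespace Paper

open CategoryTheory Limits

universe v u

variable {C : Type u} [Category.{v} C]

/-- Comparison map from the clan pullback of `tp` along `A` to the universe's chosen
context extension `Γ.A` (it is an isomorphism of pullbacks). -/
noncomputable def pbToExt (U : Univ C) (D : PiClan C) (htp : D.R U.tp) {Γ : C}
    (A : Γ ⟶ U.Ty) : D.pb A U.tp htp ⟶ U.ext A :=
  U.substCons (D.pbFst A U.tp htp) A (D.pbSnd A U.tp htp)
    (D.pb_isPullback A U.tp htp).w.symm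

/-- Context extensions of an algebraic universe are `R`-maps. -/
lemma disp_mem (U : Univ C) (D : PiClan C) (htp : D.R U.tp) {Γ : C} (A : Γ ⟶ U.Ty) :
    D.R (U.disp A) :=
  D.pbMem (U.isPullback A).flip htp

namespace PiClan

variable (D : PiClan C)

@[simp] lemma pbMapLeft_fst {A' A X Y : C} (σ : A' ⟶ A) (h : A ⟶ X) (f : Y ⟶ X)
    (hf : D.R f) :
    D.pbMapLeft σ h f hf ≫ D.pbFst h f hf = D.pbFst (σ ≫ h) f hf ≫ σ :=
  (D.pb_isPullback h f hf).lift_fst _ _ _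

@[simp] lemma pbMapLeft_snd {A' A X Y : C} (σ : A' ⟶ A) (h : A ⟶ X) (f : Y ⟶ X)
    (hf : D.R f) :
    D.pbMapLeft σ h f hf ≫ D.pbSnd h f hf = D.pbSnd (σ ≫ h) f hf :=
  (D.pb_isPullback h f hf).lift_snd _ _ _

section PolyLemmas

variable {E B : C} (f : E ⟶ B) (hf : D.R f)

/-- The canonical map into the counit domain `cod` determined by `(g, t)`. -/
noncomputable def toCod (X : C) {Γ : C} (g : Γ ⟶ B) (t : Γ ⟶ D.polyObj f hf X)
    (ht : t ≫ D.fstProj f hf X = g) : D.pb g f hf ⟶ (D.polyPush f hf X).cod :=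
  (D.polyPush f hf X).cod_isPullback.lift (D.pbFst g f hf ≫ t) (D.pbSnd g f hf)
    ((Category.assoc _ _ _).trans ((congrArg (D.pbFst g f hf ≫ ·) ht).trans (D.pb_isPullback g f hf).w))

@[simp] lemma toCod_fst (X : C) {Γ : C} (g : Γ ⟶ B) (t : Γ ⟶ D.polyObj f hf X)
    (ht : t ≫ D.fstProj f hf X = g) :
    D.toCod f hf X g t ht ≫ (D.polyPush f hf X).codFst = D.pbFst g f hf ≫ t :=
  (D.polyPush f hf X).cod_isPullback.lift_fst _ _ _

@[simp] lemma toCod_snd (X : C) {Γ : C} (g : Γ ⟶ B) (t : Γ ⟶ D.polyObj f hf X)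
    (ht : t ≫ D.fstProj f hf X = g) :
    D.toCod f hf X g t ht ≫ (D.polyPush f hf X).codSnd = D.pbSnd g f hf :=
  (D.polyPush f hf X).cod_isPullback.lift_snd _ _ _

/-- `polySndAt` expressed through the counit. -/
lemma polySndAt_eq_cod (X : C) {Γ : C} (g : Γ ⟶ B) (t : Γ ⟶ D.polyObj f hf X)
    (ht : t ≫ D.fstProj f hf X = g) :
    D.polySndAt f hf X g t ht =
      D.toCod f hf X g t ht ≫ (D.polyPush f hf X).ε ≫ D.estarFst E X := by
  have h1 : (D.pb_isPullback (D.fstProj f hf X) f hf).lift (D.pbFst g f hf ≫ t)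
        (D.pbSnd g f hf)
        (by rw [Category.assoc, ht]; exact (D.pb_isPullback g f hf).w) ≫
      (D.polyPush f hf X).cod_isPullback.lift (D.pbFst (D.fstProj f hf X) f hf)
        (D.pbSnd (D.fstProj f hf X) f hf) (D.pb_isPullback (D.fstProj f hf X) f hf).w
      = D.toCod f hf X g t ht := by
    apply (D.polyPush f hf X).cod_isPullback.hom_ext
    · simp only [Category.assoc, IsPullback.lift_fst, toCod_fst]; erw [IsPullback.lift_fst, IsPullback.lift_fst]
    · simp only [Category.assoc, IsPullback.lift_snd, toCod_snd]; erw [IsPullback.lift_snd, IsPullback.lift_snd]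
  simp only [polySndAt, sndProj, ← Category.assoc]
  rw [h1]

/-- β for `polyPair`. -/
lemma polySndAt_polyPair (X : C) {Γ : C} (g : Γ ⟶ B) (x : D.pb g f hf ⟶ X)
    (ht : D.polyPair f hf X g x ≫ D.fstProj f hf X = g) :
    D.polySndAt f hf X g (D.polyPair f hf X g x) ht = x := by
  rw [polySndAt_eq_cod]
  have hε := (D.polyPush f hf X).lift_ε g (D.pbFst g f hf) (D.pbSnd g f hf)
    (D.pb_isPullback g f hf)
    ((D.pb_isPullback (D.isTerm.from X) (D.isTerm.from E) (D.allObj E)).lift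
      x (D.pbSnd g f hf) (D.isTerm.hom_ext _ _))
    ((D.pb_isPullback (D.isTerm.from X) (D.isTerm.from E) (D.allObj E)).lift_snd _ _ _)
  have h2 : D.toCod f hf X g (D.polyPair f hf X g x) ht ≫ (D.polyPush f hf X).ε =
      (D.pb_isPullback (D.isTerm.from X) (D.isTerm.from E) (D.allObj E)).lift
        x (D.pbSnd g f hf) (D.isTerm.hom_ext _ _) := hε
  rw [← Category.assoc, h2]
  exact (D.pb_isPullback (D.isTerm.from X) (D.isTerm.from E) (D.allObj E)).lift_fst _ _ _

/-- η for `polyPair`. -/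
lemma polyPair_polySndAt (X : C) {Γ : C} (g : Γ ⟶ B) (t : Γ ⟶ D.polyObj f hf X)
    (ht : t ≫ D.fstProj f hf X = g) :
    D.polyPair f hf X g (D.polySndAt f hf X g t ht) = t := by
  symm
  apply (D.polyPush f hf X).lift_unique g (D.pbFst g f hf) (D.pbSnd g f hf)
    (D.pb_isPullback g f hf) _ _ t ht
  apply (D.pb_isPullback (D.isTerm.from X) (D.isTerm.from E) (D.allObj E)).hom_ext
  · show (D.toCod f hf X g t ht ≫ (D.polyPush f hf X).ε) ≫ D.estarFst E X =
      (D.pb_isPullback (D.isTerm.from X) (D.isTerm.from E) (D.allObj E)).lift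
        (D.polySndAt f hf X g t ht) (D.pbSnd g f hf) (D.isTerm.hom_ext _ _) ≫
        D.estarFst E X
    rw [Category.assoc, ← polySndAt_eq_cod]
    exact ((D.pb_isPullback (D.isTerm.from X) (D.isTerm.from E)
      (D.allObj E)).lift_fst _ _ _).symm
  · show (D.toCod f hf X g t ht ≫ (D.polyPush f hf X).ε) ≫ D.estarSnd E X =
      (D.pb_isPullback (D.isTerm.from X) (D.isTerm.from E) (D.allObj E)).lift
        (D.polySndAt f hf X g t ht) (D.pbSnd g f hf) (D.isTerm.hom_ext _ _) ≫
        D.estarSnd E X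
    rw [Category.assoc, (D.polyPush f hf X).ε_comm, toCod_snd]
    exact ((D.pb_isPullback (D.isTerm.from X) (D.isTerm.from E)
      (D.allObj E)).lift_snd _ _ _).symm

/-- Naturality of `polySndAt` in `Γ`. -/
lemma polySndAt_comp (X : C) {Δ Γ : C} (σ : Δ ⟶ Γ) (g : Γ ⟶ B)
    (t : Γ ⟶ D.polyObj f hf X) (ht : t ≫ D.fstProj f hf X = g)
    (ht' : (σ ≫ t) ≫ D.fstProj f hf X = σ ≫ g) :
    D.polySndAt f hf X (σ ≫ g) (σ ≫ t) ht' =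
      D.pbMapLeft σ g f hf ≫ D.polySndAt f hf X g t ht := by
  rw [polySndAt_eq_cod, polySndAt_eq_cod]
  have h1 : D.toCod f hf X (σ ≫ g) (σ ≫ t) ht' =
      D.pbMapLeft σ g f hf ≫ D.toCod f hf X g t ht := by
    apply (D.polyPush f hf X).cod_isPullback.hom_ext
    · rw [Category.assoc, toCod_fst, toCod_fst, ← Category.assoc, ← pbMapLeft_fst,
        Category.assoc]; rfl
    · simp only [Category.assoc, toCod_snd, pbMapLeft_snd]
  rw [h1, Category.assoc]

/-- Naturality of `polyPair` in `Γ`. -/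
lemma polyPair_comp (X : C) {Δ Γ : C} (σ : Δ ⟶ Γ) (g : Γ ⟶ B) (x : D.pb g f hf ⟶ X) :
    σ ≫ D.polyPair f hf X g x =
      D.polyPair f hf X (σ ≫ g) (D.pbMapLeft σ g f hf ≫ x) := by
  have ht : D.polyPair f hf X g x ≫ D.fstProj f hf X = g := D.polyPair_fst f hf X g x
  have ht' : (σ ≫ D.polyPair f hf X g x) ≫ D.fstProj f hf X = σ ≫ g := by
    rw [Category.assoc, ht]
  rw [← D.polyPair_polySndAt f hf X (σ ≫ g) (σ ≫ D.polyPair f hf X g x) ht']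
  rw [polySndAt_comp D f hf X σ g _ ht ht', polySndAt_polyPair]

/-- `polySndAt` after the functorial action `polyMap`. -/
lemma polySndAt_polyMap {X X' : C} (u : X ⟶ X') {Γ : C} (g : Γ ⟶ B)
    (t : Γ ⟶ D.polyObj f hf X) (ht : t ≫ D.fstProj f hf X = g)
    (ht' : (t ≫ D.polyMap f hf u) ≫ D.fstProj f hf X' = g) :
    D.polySndAt f hf X' g (t ≫ D.polyMap f hf u) ht' =
      D.polySndAt f hf X g t ht ≫ u := by
  subst ht
  have hmap : D.polyMap f hf u ≫ D.fstProj f hf X' = D.fstProj f hf X :=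
    D.polyPair_fst f hf X' _ _
  rw [D.polySndAt_comp f hf X' t (D.fstProj f hf X) (D.polyMap f hf u) hmap
    (by rw [Category.assoc, hmap])]
  have hb : D.polySndAt f hf X' (D.fstProj f hf X) (D.polyMap f hf u) hmap =
      D.sndProj f hf X ≫ u :=
    D.polySndAt_polyPair f hf X' (D.fstProj f hf X) (D.sndProj f hf X ≫ u)
      (D.polyPair_fst f hf X' _ _)
  rw [hb]
  have h2 : D.polySndAt f hf X (t ≫ D.fstProj f hf X) t rfl =
      D.pbMapLeft t (D.fstProj f hf X) f hf ≫ D.sndProj f hf X := rfl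
  rw [h2, Category.assoc]

/-- `polyPair` composed with the functorial action `polyMap`. -/
lemma polyPair_polyMap (X X' : C) (u : X ⟶ X') {Γ : C} (g : Γ ⟶ B)
    (x : D.pb g f hf ⟶ X) :
    D.polyPair f hf X g x ≫ D.polyMap f hf u = D.polyPair f hf X' g (x ≫ u) := by
  have ht : D.polyPair f hf X g x ≫ D.fstProj f hf X = g := D.polyPair_fst f hf X g x
  have ht' : (D.polyPair f hf X g x ≫ D.polyMap f hf u) ≫ D.fstProj f hf X' = g := by
    rw [Category.assoc, show D.polyMap f hf u ≫ D.fstProj f hf X' = D.fstProj f hf X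
      from D.polyPair_fst f hf X' _ _]; exact ht
  rw [← D.polyPair_polySndAt f hf X' g (D.polyPair f hf X g x ≫ D.polyMap f hf u) ht']
  rw [D.polySndAt_polyMap f hf u g _ ht ht', polySndAt_polyPair]

end PolyLemmas

end PiClan

/-- Inverse comparison map, from the chosen context extension to the clan pullback. -/
noncomputable def extToPb (U : Univ C) (D : PiClan C) (htp : D.R U.tp) {Γ : C}
    (A : Γ ⟶ U.Ty) : U.ext A ⟶ D.pb A U.tp htp :=
  (D.pb_isPullback A U.tp htp).lift (U.disp A) (U.var A) (U.isPullback A).w.symm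

@[simp] lemma pbToExt_var (U : Univ C) (D : PiClan C) (htp : D.R U.tp) {Γ : C}
    (A : Γ ⟶ U.Ty) : pbToExt U D htp A ≫ U.var A = D.pbSnd A U.tp htp :=
  U.substCons_var _ _ _ _

@[simp] lemma pbToExt_disp (U : Univ C) (D : PiClan C) (htp : D.R U.tp) {Γ : C}
    (A : Γ ⟶ U.Ty) : pbToExt U D htp A ≫ U.disp A = D.pbFst A U.tp htp :=
  U.substCons_disp _ _ _ _

@[simp] lemma extToPb_fst (U : Univ C) (D : PiClan C) (htp : D.R U.tp) {Γ : C}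
    (A : Γ ⟶ U.Ty) : extToPb U D htp A ≫ D.pbFst A U.tp htp = U.disp A :=
  (D.pb_isPullback A U.tp htp).lift_fst _ _ _

@[simp] lemma extToPb_snd (U : Univ C) (D : PiClan C) (htp : D.R U.tp) {Γ : C}
    (A : Γ ⟶ U.Ty) : extToPb U D htp A ≫ D.pbSnd A U.tp htp = U.var A :=
  (D.pb_isPullback A U.tp htp).lift_snd _ _ _

@[simp] lemma extToPb_pbToExt (U : Univ C) (D : PiClan C) (htp : D.R U.tp) {Γ : C}
    (A : Γ ⟶ U.Ty) : extToPb U D htp A ≫ pbToExt U D htp A = 𝟙 (U.ext A) := by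
  apply (U.isPullback A).hom_ext
  · rw [Category.assoc, pbToExt_var, extToPb_snd, Category.id_comp]
  · rw [Category.assoc, pbToExt_disp, extToPb_fst, Category.id_comp]

@[simp] lemma pbToExt_extToPb (U : Univ C) (D : PiClan C) (htp : D.R U.tp) {Γ : C}
    (A : Γ ⟶ U.Ty) : pbToExt U D htp A ≫ extToPb U D htp A = 𝟙 (D.pb A U.tp htp) := by
  apply (D.pb_isPullback A U.tp htp).hom_ext
  · rw [Category.assoc, extToPb_fst, pbToExt_disp, Category.id_comp]
  · rw [Category.assoc, extToPb_snd, pbToExt_var, Category.id_comp]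

/-- Compatibility of the comparison maps with weakening. -/
lemma pbToExt_wk (U : Univ C) (D : PiClan C) (htp : D.R U.tp) {Δ Γ : C} (σ : Δ ⟶ Γ)
    (A : Γ ⟶ U.Ty) :
    pbToExt U D htp (σ ≫ A) ≫ U.wk σ A =
      D.pbMapLeft σ A U.tp htp ≫ pbToExt U D htp A := by
  apply (U.isPullback A).hom_ext
  · calc (pbToExt U D htp (σ ≫ A) ≫ U.wk σ A) ≫ U.var A
        = pbToExt U D htp (σ ≫ A) ≫ (U.wk σ A ≫ U.var A) := by rw [Category.assoc]
      _ = pbToExt U D htp (σ ≫ A) ≫ U.var (σ ≫ A) := by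
            rw [show U.wk σ A ≫ U.var A = U.var (σ ≫ A) from U.substCons_var _ _ _ _]
      _ = D.pbSnd (σ ≫ A) U.tp htp := pbToExt_var U D htp (σ ≫ A)
      _ = D.pbMapLeft σ A U.tp htp ≫ D.pbSnd A U.tp htp :=
            (D.pbMapLeft_snd σ A U.tp htp).symm
      _ = (D.pbMapLeft σ A U.tp htp ≫ pbToExt U D htp A) ≫ U.var A := by
            rw [Category.assoc, pbToExt_var]
  · calc (pbToExt U D htp (σ ≫ A) ≫ U.wk σ A) ≫ U.disp A
        = pbToExt U D htp (σ ≫ A) ≫ (U.wk σ A ≫ U.disp A) := by rw [Category.assoc]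
      _ = pbToExt U D htp (σ ≫ A) ≫ (U.disp (σ ≫ A) ≫ σ) := by
            rw [show U.wk σ A ≫ U.disp A = U.disp (σ ≫ A) ≫ σ
              from U.substCons_disp _ _ _ _]
      _ = (pbToExt U D htp (σ ≫ A) ≫ U.disp (σ ≫ A)) ≫ σ := by rw [Category.assoc]
      _ = D.pbFst (σ ≫ A) U.tp htp ≫ σ := by rw [pbToExt_disp]
      _ = D.pbMapLeft σ A U.tp htp ≫ D.pbFst A U.tp htp :=
            (D.pbMapLeft_fst σ A U.tp htp).symm
      _ = (D.pbMapLeft σ A U.tp htp ≫ pbToExt U D htp A) ≫ U.disp A := by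
            rw [Category.assoc, pbToExt_disp]

namespace PiClan

/-- Congruence for `polySndAt` in the element argument. -/
lemma polySndAt_congr (D : PiClan C) {E B : C} (f : E ⟶ B) (hf : D.R f) (X : C)
    {Γ : C} (g : Γ ⟶ B) {t t' : Γ ⟶ D.polyObj f hf X} (h : t = t')
    (ht : t ≫ D.fstProj f hf X = g) (ht' : t' ≫ D.fstProj f hf X = g) :
    D.polySndAt f hf X g t ht = D.polySndAt f hf X g t' ht' := by
  subst h; rfl

end PiClan

section Main

variable (D : PiClan C) (U : Univ C) (htp : D.R U.tp)
  (Pi : D.polyObj U.tp htp U.Ty ⟶ U.Ty) (lam : D.polyObj U.tp htp U.Tm ⟶ U.Tm)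
  (hsq : IsPullback lam (D.polyMap U.tp htp U.tp) U.tp Pi)

lemma polyMap_fstProj :
    D.polyMap U.tp htp U.tp ≫ D.fstProj U.tp htp U.Ty = D.fstProj U.tp htp U.Tm :=
  D.polyPair_fst U.tp htp U.Ty _ _

/-- The lift of `f` through the algebraic Π pullback square. -/
noncomputable def algUnlamAux {Γ : C} (A : Γ ⟶ U.Ty) (B : U.ext A ⟶ U.Ty)
    (f : Γ ⟶ U.Tm)
    (hf : f ≫ U.tp = D.polyPair U.tp htp U.Ty A (pbToExt U D htp A ≫ B) ≫ Pi) :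
    Γ ⟶ D.polyObj U.tp htp U.Tm :=
  hsq.lift f (D.polyPair U.tp htp U.Ty A (pbToExt U D htp A ≫ B)) hf

lemma algUnlamAux_lam {Γ : C} (A : Γ ⟶ U.Ty) (B : U.ext A ⟶ U.Ty) (f : Γ ⟶ U.Tm)
    (hf : f ≫ U.tp = D.polyPair U.tp htp U.Ty A (pbToExt U D htp A ≫ B) ≫ Pi) :
    algUnlamAux D U htp Pi lam hsq A B f hf ≫ lam = f :=
  hsq.lift_fst _ _ _

lemma algUnlamAux_polyMap {Γ : C} (A : Γ ⟶ U.Ty) (B : U.ext A ⟶ U.Ty) (f : Γ ⟶ U.Tm)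
    (hf : f ≫ U.tp = D.polyPair U.tp htp U.Ty A (pbToExt U D htp A ≫ B) ≫ Pi) :
    algUnlamAux D U htp Pi lam hsq A B f hf ≫ D.polyMap U.tp htp U.tp =
      D.polyPair U.tp htp U.Ty A (pbToExt U D htp A ≫ B) :=
  hsq.lift_snd _ _ _

lemma algUnlamAux_fst {Γ : C} (A : Γ ⟶ U.Ty) (B : U.ext A ⟶ U.Ty) (f : Γ ⟶ U.Tm)
    (hf : f ≫ U.tp = D.polyPair U.tp htp U.Ty A (pbToExt U D htp A ≫ B) ≫ Pi) :
    algUnlamAux D U htp Pi lam hsq A B f hf ≫ D.fstProj U.tp htp U.Tm = A := by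
  rw [← polyMap_fstProj D U htp, ← Category.assoc,
    algUnlamAux_polyMap D U htp Pi lam hsq A B f hf, D.polyPair_fst]

/-- The elementary Π-type structure induced by an algebraic one. -/
noncomputable def elemPiOfAlgebraic : ElemPi U where
  Pi {Γ} A B := D.polyPair U.tp htp U.Ty A (pbToExt U D htp A ≫ B) ≫ Pi
  Pi_stable {Δ Γ} σ A B := by
    beta_reduce
    rw [← Category.assoc (pbToExt U D htp (σ ≫ A)) (U.wk σ A) B,
      pbToExt_wk U D htp σ A, Category.assoc (D.pbMapLeft σ A U.tp htp),
      ← D.polyPair_comp U.tp htp U.Ty σ A (pbToExt U D htp A ≫ B), Category.assoc]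
  lam {Γ} A b := D.polyPair U.tp htp U.Tm A (pbToExt U D htp A ≫ b) ≫ lam
  lam_tp {Γ} A b := by
    beta_reduce
    rw [Category.assoc, hsq.w, ← Category.assoc,
      D.polyPair_polyMap U.tp htp U.Tm U.Ty U.tp A (pbToExt U D htp A ≫ b),
      Category.assoc (pbToExt U D htp A) b U.tp]
  lam_stable {Δ Γ} σ A b := by
    beta_reduce
    rw [← Category.assoc (pbToExt U D htp (σ ≫ A)) (U.wk σ A) b,
      pbToExt_wk U D htp σ A, Category.assoc (D.pbMapLeft σ A U.tp htp),
      ← D.polyPair_comp U.tp htp U.Tm σ A (pbToExt U D htp A ≫ b), Category.assoc]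
  unlam {Γ} A B f hf :=
    extToPb U D htp A ≫ D.polySndAt U.tp htp U.Tm A
      (algUnlamAux D U htp Pi lam hsq A B f hf)
      (algUnlamAux_fst D U htp Pi lam hsq A B f hf)
  unlam_tp {Γ} A B f hf := by
    beta_reduce
    have hfst := algUnlamAux_fst D U htp Pi lam hsq A B f hf
    have hmap : (algUnlamAux D U htp Pi lam hsq A B f hf ≫
        D.polyMap U.tp htp U.tp) ≫ D.fstProj U.tp htp U.Ty = A := by
      rw [Category.assoc, polyMap_fstProj D U htp]; exact hfst
    rw [Category.assoc,
      ← D.polySndAt_polyMap U.tp htp U.tp A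
        (algUnlamAux D U htp Pi lam hsq A B f hf) hfst hmap,
      D.polySndAt_congr U.tp htp U.Ty A
        (algUnlamAux_polyMap D U htp Pi lam hsq A B f hf) hmap
        (D.polyPair_fst U.tp htp U.Ty A (pbToExt U D htp A ≫ B)),
      D.polySndAt_polyPair U.tp htp U.Ty A (pbToExt U D htp A ≫ B),
      ← Category.assoc, extToPb_pbToExt, Category.id_comp]
  unlam_lam {Γ} A b h := by
    beta_reduce
    have hm : algUnlamAux D U htp Pi lam hsq A (b ≫ U.tp)
        (D.polyPair U.tp htp U.Tm A (pbToExt U D htp A ≫ b) ≫ lam) h =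
        D.polyPair U.tp htp U.Tm A (pbToExt U D htp A ≫ b) := by
      apply hsq.hom_ext
      · rw [algUnlamAux_lam]
      · rw [algUnlamAux_polyMap,
          D.polyPair_polyMap U.tp htp U.Tm U.Ty U.tp A (pbToExt U D htp A ≫ b),
          Category.assoc (pbToExt U D htp A) b U.tp]
    rw [D.polySndAt_congr U.tp htp U.Tm A hm
        (algUnlamAux_fst D U htp Pi lam hsq A (b ≫ U.tp) _ h)
        (D.polyPair_fst U.tp htp U.Tm A (pbToExt U D htp A ≫ b)),
      D.polySndAt_polyPair U.tp htp U.Tm A (pbToExt U D htp A ≫ b),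
      ← Category.assoc, extToPb_pbToExt, Category.id_comp]
  lam_unlam {Γ} A B f hf := by
    beta_reduce
    have h1 : pbToExt U D htp A ≫ extToPb U D htp A ≫
        D.polySndAt U.tp htp U.Tm A (algUnlamAux D U htp Pi lam hsq A B f hf)
          (algUnlamAux_fst D U htp Pi lam hsq A B f hf) =
        D.polySndAt U.tp htp U.Tm A (algUnlamAux D U htp Pi lam hsq A B f hf)
          (algUnlamAux_fst D U htp Pi lam hsq A B f hf) := by
      rw [← Category.assoc, pbToExt_extToPb, Category.id_comp]
    rw [h1, D.polyPair_polySndAt U.tp htp U.Tm A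
      (algUnlamAux D U htp Pi lam hsq A B f hf)
      (algUnlamAux_fst D U htp Pi lam hsq A B f hf),
      algUnlamAux_lam]

end Main

end Paper

open CategoryTheory Limits Paper in
/-- an algebraic `Π`-type structure `(Π, lam)` on an algebraic
universe `tp` in a π-clan gives rise to an elementary `Π`-type structure, in which
`Π_A B` is the composite of the classifying map `(A, B) : Γ ⟶ P_tp Ty` with `Π`. -/
theorem algebraicPi_to_elemPi {C : Type*} [Category C] (D : PiClan C)
    (U : Univ C) (htp : D.R U.tp)
    (Pi : D.polyObj U.tp htp U.Ty ⟶ U.Ty)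
    (lam : D.polyObj U.tp htp U.Tm ⟶ U.Tm)
    (hsq : IsPullback lam (D.polyMap U.tp htp U.tp) U.tp Pi) :
    ∃ P : ElemPi U,
      ∀ {Γ : C} (A : Γ ⟶ U.Ty) (B : U.ext A ⟶ U.Ty),
        P.Pi A B = D.polyPair U.tp htp U.Ty A (pbToExt U D htp A ≫ B) ≫ Pi := by
  exact ⟨elemPiOfAlgebraic D U htp Pi lam hsq, fun A B => rfl⟩
end

section
/- Let (C, R) be a π-clan and tp : Tm ⟶ Ty an algebraic universe, and let R_tp denote the principal class generated by tp (all pullbacks of tp). Then: (i) if C has a terminal object and R_tp contains all isomorphisms, then tp admits an algebraic Unit-type structure; (ii) if R_tp is closed under composition, then tp admits an algebraic Σ-type structure; (iii) if R_tp is closed under pushforward (i.e. for every R_tp-map f, the pushforward along f of any R_tp-map between objects over the domain of f is again an R_tp-map), then tp admits an algebraic Π-type structure. In particular, if R_tp is a π-preclan then tp models Unit-, Σ-, and Π-types algebraically. -/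
namespace Paper

open CategoryTheory Limits

universe v' u'

variable {C : Type u'} [Category.{v'} C]

namespace PiClan

variable (D : PiClan C)

/-- The map `E × X ⟶ E × X'` induced by `u : X ⟶ X'`. -/
noncomputable def estarMap (E : C) {X X' : C} (u : X ⟶ X') :
    D.estar E X ⟶ D.estar E X' :=
  (D.pb_isPullback (D.isTerm.from X') (D.isTerm.from E) (D.allObj E)).lift
    (D.estarFst E X ≫ u) (D.estarSnd E X) (D.isTerm.hom_ext _ _)

@[simp] lemma estarMap_fst (E : C) {X X' : C} (u : X ⟶ X') :
    D.estarMap E u ≫ D.estarFst E X' = D.estarFst E X ≫ u :=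
  (D.pb_isPullback _ _ _).lift_fst _ _ _

@[simp] lemma estarMap_snd (E : C) {X X' : C} (u : X ⟶ X') :
    D.estarMap E u ≫ D.estarSnd E X' = D.estarSnd E X :=
  (D.pb_isPullback _ _ _).lift_snd _ _ _

/-- The polynomial action on morphisms is a pushforward functorial action. -/
lemma polyMap_eq_pushMap {E B : C} (f : E ⟶ B) (hf : D.R f) {X X' : C} (u : X ⟶ X') :
    D.polyMap f hf u = D.pushMap f (D.estarSnd E X) (D.estarSnd E X') hf
      (D.estarSnd_mem E X) (D.estarSnd_mem E X') (D.estarMap E u)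
      (D.estarMap_snd E u) := by
  symm
  unfold PiClan.polyMap PiClan.polyPair
  apply Pushforward.lift_unique
  case hm => exact D.pushMap_π f _ _ hf _ _ _ _
  -- the counit condition
  set P₁ := D.push f (D.estarSnd E X) hf (D.estarSnd_mem E X) with hP₁def
  set P' := D.push f (D.estarSnd E X') hf (D.estarSnd_mem E X') with hP'def
  set pm := D.pushMap f (D.estarSnd E X) (D.estarSnd E X') hf
      (D.estarSnd_mem E X) (D.estarSnd_mem E X') (D.estarMap E u)
      (D.estarMap_snd E u) with hpmdef
  have hpmπ : pm ≫ P'.π = P₁.π := D.pushMap_π f _ _ hf _ _ _ _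
  set φ := P₁.cod_isPullback.lift (D.pbFst (D.fstProj f hf X) f hf)
    (D.pbSnd (D.fstProj f hf X) f hf)
    (D.pb_isPullback (D.fstProj f hf X) f hf).w with hφdef
  have hφ₁ : φ ≫ P₁.codFst = D.pbFst (D.fstProj f hf X) f hf :=
    P₁.cod_isPullback.lift_fst _ _ _
  have hφ₂ : φ ≫ P₁.codSnd = D.pbSnd (D.fstProj f hf X) f hf :=
    P₁.cod_isPullback.lift_snd _ _ _
  have hMε : P'.cod_isPullback.lift (P₁.codFst ≫ pm) P₁.codSnd
      (by rw [Category.assoc, hpmπ]; exact P₁.cod_isPullback.w) ≫ P'.ε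
      = P₁.ε ≫ D.estarMap E u := by
    exact P'.lift_ε P₁.π P₁.codFst P₁.codSnd P₁.cod_isPullback
      (P₁.ε ≫ D.estarMap E u)
      (by rw [Category.assoc, D.estarMap_snd, P₁.ε_comm])
  have hL : P'.cod_isPullback.lift
      (D.pbFst (D.fstProj f hf X) f hf ≫ pm) (D.pbSnd (D.fstProj f hf X) f hf)
      (by exact (Category.assoc _ _ _).trans ((congrArg (fun x => D.pbFst (D.fstProj f hf X) f hf ≫ x) hpmπ).trans (D.pb_isPullback (D.fstProj f hf X) f hf).w))
      = φ ≫ P'.cod_isPullback.lift (P₁.codFst ≫ pm) P₁.codSnd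
        (by rw [Category.assoc, hpmπ]; exact P₁.cod_isPullback.w) := by
    apply P'.cod_isPullback.hom_ext
    · rw [P'.cod_isPullback.lift_fst, Category.assoc, P'.cod_isPullback.lift_fst,
        ← Category.assoc, hφ₁]; rfl
    · rw [P'.cod_isPullback.lift_snd, Category.assoc, P'.cod_isPullback.lift_snd, hφ₂]
  have E1 : P'.cod_isPullback.lift
      (D.pbFst (D.fstProj f hf X) f hf ≫ pm) (D.pbSnd (D.fstProj f hf X) f hf)
      (by exact (Category.assoc _ _ _).trans ((congrArg (fun x => D.pbFst (D.fstProj f hf X) f hf ≫ x) hpmπ).trans (D.pb_isPullback (D.fstProj f hf X) f hf).w))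
      ≫ P'.ε = φ ≫ P₁.ε ≫ D.estarMap E u := by
    rw [hL, Category.assoc, hMε]
  set k := (D.pb_isPullback (D.isTerm.from X') (D.isTerm.from E) (D.allObj E)).lift
      (D.sndProj f hf X ≫ u) (D.pbSnd (D.fstProj f hf X) f hf) (D.isTerm.hom_ext _ _)
      with hkdef
  have hk1 : k ≫ D.estarFst E X' = D.sndProj f hf X ≫ u :=
    (D.pb_isPullback _ _ _).lift_fst _ _ _
  have hk2 : k ≫ D.estarSnd E X' = D.pbSnd (D.fstProj f hf X) f hf :=
    (D.pb_isPullback _ _ _).lift_snd _ _ _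
  have E2 : φ ≫ P₁.ε ≫ D.estarMap E u = k := by
    apply (D.pb_isPullback (D.isTerm.from X') (D.isTerm.from E) (D.allObj E)).hom_ext
    · show (φ ≫ P₁.ε ≫ D.estarMap E u) ≫ D.estarFst E X' = k ≫ D.estarFst E X'
      rw [hk1]
      have hsnd : D.sndProj f hf X = φ ≫ P₁.ε ≫ D.estarFst E X := rfl
      rw [hsnd]
      simp only [Category.assoc]
      rw [D.estarMap_fst]
    · show (φ ≫ P₁.ε ≫ D.estarMap E u) ≫ D.estarSnd E X' = k ≫ D.estarSnd E X'
      rw [hk2]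
      simp only [Category.assoc]
      rw [D.estarMap_snd]
      have hεc : P₁.ε ≫ D.estarSnd E X = P₁.codSnd := P₁.ε_comm
      rw [hεc, hφ₂]
  exact E1.trans E2

lemma pushMap_congr {X Y Z₁ Z₂ : C} (f : Y ⟶ X) {g₁ g₁' : Z₁ ⟶ Y} (e : g₁ = g₁')
    (g₂ : Z₂ ⟶ Y) (hf : D.R f) (hg₁ : D.R g₁) (hg₁' : D.R g₁') (hg₂ : D.R g₂)
    (t : Z₁ ⟶ Z₂) (ht : t ≫ g₂ = g₁) (ht' : t ≫ g₂ = g₁')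
    (P : MorphismProperty C) (hp : P (D.pushMap f g₁ g₂ hf hg₁ hg₂ t ht)) :
    P (D.pushMap f g₁' g₂ hf hg₁' hg₂ t ht') := by
  subst e; exact hp

/-- Beck–Chevalley: if the principal class of `tp` is closed under pushforward
(in the existential sense), then the functorial action of a pushforward on a
principal morphism is again principal. -/
lemma pushMap_principal {Tm Ty : C} (tp : Tm ⟶ Ty) (htp : D.R tp)
    {X Y Z₁ Z₂ : C} (f : Y ⟶ X) (hf : D.R f) (hfP : principal tp f)
    (g₂ : Z₂ ⟶ Y) (hg₂ : D.R g₂) (t : Z₁ ⟶ Z₂) (htP : principal tp t)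
    (g₁ : Z₁ ⟶ Y) (ht : t ≫ g₂ = g₁) (hg₁ : D.R g₁)
    (pushClosed : ∀ {A B P : C} (u : A ⟶ B) (v : P ⟶ A),
      principal tp u → principal tp v → ∃ p : Pushforward u v, principal tp p.π) :
    principal tp (D.pushMap f g₁ g₂ hf hg₁ hg₂ t ht) := by
  obtain ⟨τ, β, hSq⟩ := htP
  obtain ⟨ftop, fbase, fSq⟩ := hfP
  set P₁ := D.push f g₁ hf hg₁ with hP₁def
  set P₂ := D.push f g₂ hf hg₂ with hP₂def
  set pm := D.pushMap f g₁ g₂ hf hg₁ hg₂ t ht with hpmdef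
  have hpmπ : pm ≫ P₂.π = P₁.π := D.pushMap_π f g₁ g₂ hf hg₁ hg₂ t ht
  have qsq := D.pb_isPullback (P₂.ε ≫ β) tp htp
  obtain ⟨q, qtop, qbase, qπSq⟩ := pushClosed P₂.codFst (D.pbFst (P₂.ε ≫ β) tp htp)
    ⟨P₂.codSnd ≫ ftop, P₂.π ≫ fbase, P₂.cod_isPullback.flip.paste_horiz fSq⟩
    ⟨D.pbSnd (P₂.ε ≫ β) tp htp, P₂.ε ≫ β, (D.pb_isPullback (P₂.ε ≫ β) tp htp).flip⟩
  -- the comparison map between the counit pullbacks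
  set χ : P₁.cod ⟶ P₂.cod := P₂.cod_isPullback.lift (P₁.codFst ≫ pm) P₁.codSnd
    (by rw [Category.assoc, hpmπ]; exact P₁.cod_isPullback.w) with hχdef
  have hχ₁ : χ ≫ P₂.codFst = P₁.codFst ≫ pm := P₂.cod_isPullback.lift_fst _ _ _
  have hχ₂ : χ ≫ P₂.codSnd = P₁.codSnd := P₂.cod_isPullback.lift_snd _ _ _
  have hχε : χ ≫ P₂.ε = P₁.ε ≫ t := by
    exact P₂.lift_ε P₁.π P₁.codFst P₁.codSnd P₁.cod_isPullback (P₁.ε ≫ t)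
      (by rw [Category.assoc, ht, P₁.ε_comm])
  -- square exhibiting P₁.cod as pullback of P₂.codFst along pm
  have Sq₁ : IsPullback P₁.codFst χ pm P₂.codFst := by
    refine IsPullback.of_bot ?_ hχ₁.symm P₂.cod_isPullback
    rw [hχ₂, hpmπ]; exact P₁.cod_isPullback
  have hkμw : χ ≫ (P₂.ε ≫ β) = (P₁.ε ≫ τ) ≫ tp := by
    rw [← Category.assoc, hχε, Category.assoc, ← hSq.w, Category.assoc]
  set kμ : P₁.cod ⟶ D.pb (P₂.ε ≫ β) tp htp := qsq.lift χ (P₁.ε ≫ τ) hkμw with hkμdef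
  have hkμ₁ : kμ ≫ D.pbFst (P₂.ε ≫ β) tp htp = χ := qsq.lift_fst _ _ _
  have hkμ₂ : kμ ≫ D.pbSnd (P₂.ε ≫ β) tp htp = P₁.ε ≫ τ := qsq.lift_snd _ _ _
  set μ : P₁.obj ⟶ q.obj := q.lift pm P₁.codFst χ Sq₁ kμ hkμ₁ with hμdef
  have hμπ : μ ≫ q.π = pm := q.lift_π _ _ _ _ _ _
  set ψ : P₁.cod ⟶ q.cod := q.cod_isPullback.lift (P₁.codFst ≫ μ) χ
    (by rw [Category.assoc, hμπ]; exact Sq₁.w) with hψdef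
  have hψ₁ : ψ ≫ q.codFst = P₁.codFst ≫ μ := q.cod_isPullback.lift_fst _ _ _
  have hψ₂ : ψ ≫ q.codSnd = χ := q.cod_isPullback.lift_snd _ _ _
  have hψε : ψ ≫ q.ε = kμ := q.lift_ε pm P₁.codFst χ Sq₁ kμ hkμ₁
  -- construction of the inverse ν
  have pasted : IsPullback q.codFst (q.codSnd ≫ P₂.codSnd) (q.π ≫ P₂.π) f :=
    q.cod_isPullback.paste_vert P₂.cod_isPullback
  have hk'w : (q.ε ≫ D.pbSnd (P₂.ε ≫ β) tp htp) ≫ tp = (q.codSnd ≫ P₂.ε) ≫ β := by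
    rw [Category.assoc, ← qsq.w, ← Category.assoc, q.ε_comm, Category.assoc]
  set k' : q.cod ⟶ Z₁ := hSq.lift (q.ε ≫ D.pbSnd (P₂.ε ≫ β) tp htp)
    (q.codSnd ≫ P₂.ε) hk'w with hk'def
  have hk'τ : k' ≫ τ = q.ε ≫ D.pbSnd (P₂.ε ≫ β) tp htp := hSq.lift_fst _ _ _
  have hk't : k' ≫ t = q.codSnd ≫ P₂.ε := hSq.lift_snd _ _ _
  have hk'g : k' ≫ g₁ = q.codSnd ≫ P₂.codSnd := by
    rw [← ht, ← Category.assoc, hk't, Category.assoc, P₂.ε_comm]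
  set ν : q.obj ⟶ P₁.obj := P₁.lift (q.π ≫ P₂.π) q.codFst (q.codSnd ≫ P₂.codSnd)
    pasted k' hk'g with hνdef
  have hνπ : ν ≫ P₁.π = q.π ≫ P₂.π := P₁.lift_π _ _ _ _ _ _
  set φ' : q.cod ⟶ P₁.cod := P₁.cod_isPullback.lift (q.codFst ≫ ν)
    (q.codSnd ≫ P₂.codSnd) (by rw [Category.assoc, hνπ]; exact pasted.w) with hφ'def
  have hφ'₁ : φ' ≫ P₁.codFst = q.codFst ≫ ν := P₁.cod_isPullback.lift_fst _ _ _
  have hφ'₂ : φ' ≫ P₁.codSnd = q.codSnd ≫ P₂.codSnd := P₁.cod_isPullback.lift_snd _ _ _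
  have hφ'ε : φ' ≫ P₁.ε = k' :=
    P₁.lift_ε (q.π ≫ P₂.π) q.codFst (q.codSnd ≫ P₂.codSnd) pasted k' hk'g
  -- Step 1 : ν ≫ pm = q.π
  have step1 : ν ≫ pm = q.π := by
    have e₂ : q.π = P₂.lift (q.π ≫ P₂.π) q.codFst (q.codSnd ≫ P₂.codSnd) pasted
        (q.codSnd ≫ P₂.ε) (by rw [Category.assoc, P₂.ε_comm]) := by
      refine P₂.lift_unique _ _ _ _ _ (by rw [Category.assoc, P₂.ε_comm]) _ rfl ?_
      have hL₀ : P₂.cod_isPullback.lift (q.codFst ≫ q.π) (q.codSnd ≫ P₂.codSnd)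
          (by rw [Category.assoc]; exact pasted.w) = q.codSnd := by
        apply P₂.cod_isPullback.hom_ext
        · rw [P₂.cod_isPullback.lift_fst, q.cod_isPullback.w]
        · rw [P₂.cod_isPullback.lift_snd]
      rw [hL₀]
    have e₁ : ν ≫ pm = P₂.lift (q.π ≫ P₂.π) q.codFst (q.codSnd ≫ P₂.codSnd) pasted
        (q.codSnd ≫ P₂.ε) (by rw [Category.assoc, P₂.ε_comm]) := by
      refine P₂.lift_unique _ _ _ _ _ (by rw [Category.assoc, P₂.ε_comm]) _
        (by rw [Category.assoc, hpmπ, hνπ]) ?_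
      have hL₁ : P₂.cod_isPullback.lift (q.codFst ≫ (ν ≫ pm)) (q.codSnd ≫ P₂.codSnd)
          (by rw [Category.assoc, Category.assoc, hpmπ, hνπ]; exact pasted.w)
          = φ' ≫ χ := by
        apply P₂.cod_isPullback.hom_ext
        · rw [P₂.cod_isPullback.lift_fst, Category.assoc, hχ₁, reassoc_of% hφ'₁]
        · rw [P₂.cod_isPullback.lift_snd, Category.assoc, hχ₂, hφ'₂]
      rw [hL₁, Category.assoc, hχε, ← Category.assoc, hφ'ε, hk't]
    rw [e₁, ← e₂]
  -- Step 2 : μ ≫ ν = 𝟙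
  have hψk' : ψ ≫ k' = P₁.ε := by
    apply hSq.hom_ext
    · rw [Category.assoc, hk'τ, ← Category.assoc, hψε, hkμ₂]
    · rw [Category.assoc, hk't, ← Category.assoc, hψ₂, hχε]
  have step2 : μ ≫ ν = 𝟙 P₁.obj := by
    have id1 : (𝟙 P₁.obj) = P₁.lift P₁.π P₁.codFst P₁.codSnd P₁.cod_isPullback
        P₁.ε P₁.ε_comm := by
      refine P₁.lift_unique _ _ _ _ _ P₁.ε_comm _ (Category.id_comp _) ?_
      have : P₁.cod_isPullback.lift (P₁.codFst ≫ 𝟙 P₁.obj) P₁.codSnd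
          (by rw [Category.assoc, Category.id_comp]; exact P₁.cod_isPullback.w)
          = 𝟙 P₁.cod := by
        apply P₁.cod_isPullback.hom_ext <;> simp
      rw [this, Category.id_comp]
    have e₃ : μ ≫ ν = P₁.lift P₁.π P₁.codFst P₁.codSnd P₁.cod_isPullback
        P₁.ε P₁.ε_comm := by
      refine P₁.lift_unique _ _ _ _ _ P₁.ε_comm _
        (by rw [Category.assoc, hνπ, ← Category.assoc, hμπ, hpmπ]) ?_
      have hL₂ : P₁.cod_isPullback.lift (P₁.codFst ≫ (μ ≫ ν)) P₁.codSnd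
          (by rw [Category.assoc, Category.assoc, hνπ, reassoc_of% hμπ, hpmπ]; exact P₁.cod_isPullback.w)
          = ψ ≫ φ' := by
        apply P₁.cod_isPullback.hom_ext
        · rw [P₁.cod_isPullback.lift_fst, Category.assoc, hφ'₁, reassoc_of% hψ₁]
        · rw [P₁.cod_isPullback.lift_snd, Category.assoc, hφ'₂, reassoc_of% hψ₂, hχ₂]
      rw [hL₂, Category.assoc, hφ'ε, hψk']
    rw [e₃, ← id1]
  -- Step 3 : ν ≫ μ = 𝟙
  have hφ'χ : φ' ≫ χ = q.codSnd := by
    apply P₂.cod_isPullback.hom_ext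
    · rw [Category.assoc, hχ₁, reassoc_of% hφ'₁, step1, q.cod_isPullback.w]
    · rw [Category.assoc, hχ₂, hφ'₂]
  have hφ'kμ : φ' ≫ kμ = q.ε := by
    apply qsq.hom_ext
    · rw [Category.assoc, hkμ₁, hφ'χ, q.ε_comm]
    · rw [Category.assoc, hkμ₂, ← Category.assoc, hφ'ε, hk'τ]
  have step3 : ν ≫ μ = 𝟙 q.obj := by
    have id2 : (𝟙 q.obj) = q.lift q.π q.codFst q.codSnd q.cod_isPullback
        q.ε q.ε_comm := by
      refine q.lift_unique _ _ _ _ _ q.ε_comm _ (Category.id_comp _) ?_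
      have : q.cod_isPullback.lift (q.codFst ≫ 𝟙 q.obj) q.codSnd
          (by rw [Category.assoc, Category.id_comp]; exact q.cod_isPullback.w)
          = 𝟙 q.cod := by
        apply q.cod_isPullback.hom_ext <;> simp
      rw [this, Category.id_comp]
    have e₄ : ν ≫ μ = q.lift q.π q.codFst q.codSnd q.cod_isPullback
        q.ε q.ε_comm := by
      refine q.lift_unique _ _ _ _ _ q.ε_comm _
        (by rw [Category.assoc, hμπ, step1]) ?_
      have hL₃ : q.cod_isPullback.lift (q.codFst ≫ (ν ≫ μ)) q.codSnd
          (by rw [Category.assoc, Category.assoc, hμπ, step1]; exact q.cod_isPullback.w)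
          = φ' ≫ ψ := by
        apply q.cod_isPullback.hom_ext
        · rw [q.cod_isPullback.lift_fst, Category.assoc, hψ₁, reassoc_of% hφ'₁]
        · rw [q.cod_isPullback.lift_snd, Category.assoc, hψ₂, hφ'χ]
      rw [hL₃, Category.assoc, hψε, hφ'kμ]
    rw [e₄, ← id2]
  haveI : IsIso μ := ⟨ν, step2, step3⟩
  have sq0 : IsPullback μ pm q.π (𝟙 P₂.obj) :=
    IsPullback.of_horiz_isIso ⟨by rw [Category.comp_id, hμπ]⟩
  exact ⟨μ ≫ qtop, 𝟙 P₂.obj ≫ qbase, sq0.paste_horiz qπSq⟩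

end PiClan

end Paper

open CategoryTheory Limits Paper in
/-- let `tp` be an algebraic universe in a π-clan and `R_tp` the
principal class of its pullbacks. (i) If `R_tp` contains all isomorphisms (the
category having a terminal object, here `D.term`), `tp` admits an algebraic
`Unit`-type structure; (ii) if `R_tp` is closed under composition, `tp` admits an
algebraic `Σ`-type structure; (iii) if `R_tp` is closed under pushforward (the
pushforward along an `R_tp`-map of any `R_tp`-map between objects over its domain
is again `R_tp`), `tp` admits an algebraic `Π`-type structure. In particular, if
`R_tp` is a π-preclan then `tp` models `Unit`-, `Σ`-, and `Π`-types algebraically. -/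
theorem principal_to_algebraic {C : Type*} [Category C] (D : PiClan C)
    (U : Univ C) (htp : D.R U.tp) :
    -- (i)
    ((∀ {X Y : C} (e : X ⟶ Y), IsIso e → principal U.tp e) →
      ∃ (Unit' : D.term ⟶ U.Ty) (unit' : D.term ⟶ U.Tm),
        IsPullback unit' (𝟙 D.term) U.tp Unit') ∧
    -- (ii)
    ((∀ {X Y Z : C} (f : X ⟶ Y) (g : Y ⟶ Z),
        principal U.tp f → principal U.tp g → principal U.tp (f ≫ g)) →
      ∃ (Sig : D.polyObj U.tp htp U.Ty ⟶ U.Ty)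
        (pr : D.compDom U.tp htp U.tp htp ⟶ U.Tm),
        IsPullback pr (D.polyComp U.tp htp U.tp htp) U.tp Sig) ∧
    -- (iii)
    ((∀ {X Y Z W : C} (f : Y ⟶ X) (hfR : D.R f) (_ : principal U.tp f)
        (g : Z ⟶ Y) (hgR : D.R g) (h : W ⟶ Z) (hhR : D.R h)
        (_ : principal U.tp h),
        principal U.tp
          (D.pushMap f (h ≫ g) g hfR (D.compMem h g hhR hgR) hgR h rfl)) →
      ∃ (Pi : D.polyObj U.tp htp U.Ty ⟶ U.Ty)
        (lm : D.polyObj U.tp htp U.Tm ⟶ U.Tm),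
        IsPullback lm (D.polyMap U.tp htp U.tp) U.tp Pi) ∧
    -- in particular
    (IsPiPreclan (principal U.tp) →
      (∃ (Unit' : D.term ⟶ U.Ty) (unit' : D.term ⟶ U.Tm),
        IsPullback unit' (𝟙 D.term) U.tp Unit') ∧
      (∃ (Sig : D.polyObj U.tp htp U.Ty ⟶ U.Ty)
        (pr : D.compDom U.tp htp U.tp htp ⟶ U.Tm),
        IsPullback pr (D.polyComp U.tp htp U.tp htp) U.tp Sig) ∧
      (∃ (Pi : D.polyObj U.tp htp U.Ty ⟶ U.Ty)
        (lm : D.polyObj U.tp htp U.Tm ⟶ U.Tm),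
        IsPullback lm (D.polyMap U.tp htp U.tp) U.tp Pi)) := by
  have tpP : principal U.tp U.tp := ⟨𝟙 _, 𝟙 _, IsPullback.of_horiz_isIso ⟨by simp⟩⟩
  have part1 : (∀ {X Y : C} (e : X ⟶ Y), IsIso e → principal U.tp e) →
      ∃ (Unit' : D.term ⟶ U.Ty) (unit' : D.term ⟶ U.Tm),
        IsPullback unit' (𝟙 D.term) U.tp Unit' := by
    intro hyp
    obtain ⟨top, base, sq⟩ := hyp (𝟙 D.term) (by infer_instance)
    exact ⟨base, top, sq⟩
  have part2 : (∀ {X Y Z : C} (f : X ⟶ Y) (g : Y ⟶ Z),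
        principal U.tp f → principal U.tp g → principal U.tp (f ≫ g)) →
      ∃ (Sig : D.polyObj U.tp htp U.Ty ⟶ U.Ty)
        (pr : D.compDom U.tp htp U.tp htp ⟶ U.Tm),
        IsPullback pr (D.polyComp U.tp htp U.tp htp) U.tp Sig := by
    intro hyp
    obtain ⟨top, base, sq⟩ := hyp (D.pbFst (D.sndProj U.tp htp U.Ty) U.tp htp)
      (D.pbFst (D.fstProj U.tp htp U.Ty) U.tp htp)
      ⟨_, _, (D.pb_isPullback _ _ _).flip⟩ ⟨_, _, (D.pb_isPullback _ _ _).flip⟩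
    exact ⟨base, top, sq⟩
  have part3 : (∀ {X Y Z W : C} (f : Y ⟶ X) (hfR : D.R f) (_ : principal U.tp f)
        (g : Z ⟶ Y) (hgR : D.R g) (h : W ⟶ Z) (hhR : D.R h)
        (_ : principal U.tp h),
        principal U.tp
          (D.pushMap f (h ≫ g) g hfR (D.compMem h g hhR hgR) hgR h rfl)) →
      ∃ (Pi : D.polyObj U.tp htp U.Ty ⟶ U.Ty)
        (lm : D.polyObj U.tp htp U.Tm ⟶ U.Tm),
        IsPullback lm (D.polyMap U.tp htp U.tp) U.tp Pi := by
    intro hyp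
    have e2 : U.tp ≫ D.isTerm.from U.Ty = D.isTerm.from U.Tm := D.isTerm.hom_ext _ _
    have big : IsPullback (D.estarFst U.Tm U.Tm)
        (D.estarMap U.Tm U.tp ≫ D.estarSnd U.Tm U.Ty)
        (U.tp ≫ D.isTerm.from U.Ty) (D.isTerm.from U.Tm) := by
      rw [D.estarMap_snd, e2]
      exact D.pb_isPullback _ _ _
    have tSq : IsPullback (D.estarFst U.Tm U.Tm) (D.estarMap U.Tm U.tp) U.tp
        (D.estarFst U.Tm U.Ty) :=
      IsPullback.of_bot big (D.estarMap_fst U.Tm U.tp).symm (D.pb_isPullback _ _ _)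
    have hhR : D.R (D.estarMap U.Tm U.tp) := D.pbMem tSq.flip htp
    have key := hyp U.tp htp tpP (D.estarSnd U.Tm U.Ty) (D.estarSnd_mem U.Tm U.Ty)
      (D.estarMap U.Tm U.tp) hhR ⟨_, _, tSq⟩
    have key2 := D.pushMap_congr U.tp (D.estarMap_snd U.Tm U.tp)
      (D.estarSnd U.Tm U.Ty) htp
      (D.compMem _ _ hhR (D.estarSnd_mem U.Tm U.Ty)) (D.estarSnd_mem U.Tm U.Tm)
      (D.estarSnd_mem U.Tm U.Ty) (D.estarMap U.Tm U.tp) rfl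
      (D.estarMap_snd U.Tm U.tp) (principal U.tp) key
    obtain ⟨top, base, sq⟩ := key2
    refine ⟨base, top, ?_⟩
    rw [D.polyMap_eq_pushMap U.tp htp U.tp]
    exact sq
  refine ⟨part1, part2, part3, fun pre => ⟨part1 pre.isoMem, part2 pre.compMem,
    part3 (fun f hfR hfP g hgR h hhR hhP => D.pushMap_principal U.tp htp f hfR hfP
      g hgR h hhP (h ≫ g) rfl (D.compMem h g hhR hgR)
      (fun u v hu hv => pre.pushClosed u v hu hv))⟩⟩
end
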